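/- arXiv:1510.01064 — 6 statements merged into one kernel-verified Lean document; each statement's English description precedes it below -/
import Mathlib

section
/- Let φ : ℝ → ℝ be continuously differentiable, convex, with φ(v) ≥ 0 for all v ∈ ℝ, and such that the derivative φ' is not constant on ℝ. Then for every α ∈ (0,1), the function D_α(v) = α·φ(v) + (1−α)·φ(−v) has at least one critical point (a point v* with D_α'(v*) = 0), and every critical point of D_α is a global minimum of D_α over ℝ. -/
/-!
Since `D_α` is convex, its critical points are global minima. Because `φ'` is not constant,
`φ'(b) ≠ 0` for some `b`, and the tangent line at `b` sends `φ` to `+∞` on one side; as `φ ≥ 0`,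
one of the two terms of `D_α` then tends to `+∞` in each direction, so the continuous function
`D_α` attains a minimum, which is a critical point.
-/

open Filter Set

def alphaCombination (φ : ℝ → ℝ) (α : ℝ) (v : ℝ) : ℝ := α * φ v + (1 - α) * φ (-v)

namespace ConvexOn

variable {f : ℝ → ℝ} {b : ℝ}

theorem tendsto_atTop_of_deriv_pos (hf : ConvexOn ℝ univ f) (hd : DifferentiableAt ℝ f b)
    (hb : 0 < deriv f b) : Tendsto f atTop atTop := by
  have hline : Tendsto (fun v => f b + deriv f b * (v - b)) atTop atTop :=
    tendsto_atTop_add_const_left _ _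
      ((tendsto_atTop_add_const_right _ _ tendsto_id).const_mul_atTop hb)
  refine tendsto_atTop_mono' _ ?_ hline
  filter_upwards [eventually_gt_atTop b] with v hbv
  have hslope := hf.deriv_le_slope (mem_univ b) (mem_univ v) hbv hd
  rw [slope_def_field, le_div_iff₀ (sub_pos.2 hbv)] at hslope
  linarith

theorem tendsto_atBot_of_deriv_neg (hf : ConvexOn ℝ univ f) (hd : DifferentiableAt ℝ f b)
    (hb : deriv f b < 0) : Tendsto f atBot atTop := by
  have hline : Tendsto (fun v => f b + deriv f b * (v - b)) atBot atTop :=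
    tendsto_atTop_add_const_left _ _
      ((tendsto_atBot_add_const_right _ _ tendsto_id).const_mul_atBot_of_neg hb)
  refine tendsto_atTop_mono' _ ?_ hline
  filter_upwards [eventually_lt_atBot b] with v hvb
  have hslope := hf.slope_le_deriv (mem_univ v) (mem_univ b) hvb hd
  rw [slope_def_field, div_le_iff₀ (sub_pos.2 hvb)] at hslope
  linarith

theorem isMinOn_of_deriv_eq_zero {S : Set ℝ} {x : ℝ} (hf : ConvexOn ℝ S f)
    (hx : x ∈ interior S) (hd : DifferentiableAt ℝ f x) (h : deriv f x = 0) : IsMinOn f S x :=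
  hf.isMinOn_of_rightDeriv_eq_zero hx <| by
    rw [hd.hasDerivAt.hasDerivWithinAt.derivWithin (uniqueDiffWithinAt_Ioi x), h]

end ConvexOn

section alphaCombination

variable {φ : ℝ → ℝ} {α : ℝ}

theorem ConvexOn.alphaCombination (hφ : ConvexOn ℝ univ φ) (hα₀ : 0 ≤ α) (hα₁ : α ≤ 1) :
    ConvexOn ℝ univ (alphaCombination φ α) := by
  have hneg : ConvexOn ℝ univ (fun v => φ (-v)) := by
    have := hφ.comp_linearMap (-LinearMap.id)
    rwa [preimage_univ] at this
  exact (hφ.smul hα₀).add (hneg.smul (sub_nonneg.2 hα₁))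

theorem tendsto_alphaCombination_cocompact (hφ₀ : ∀ v, 0 ≤ φ v) (hα : α ∈ Ioo 0 1)
    (hφ : Tendsto φ atTop atTop ∨ Tendsto φ atBot atTop) :
    Tendsto (alphaCombination φ α) (cocompact ℝ) atTop := by
  obtain ⟨hα₀, hα₁⟩ := hα
  have hpos : ∀ {l : Filter ℝ}, Tendsto φ l atTop → Tendsto (alphaCombination φ α) l atTop :=
    fun h => tendsto_atTop_mono
      (fun v => le_add_of_nonneg_right (mul_nonneg (sub_pos.2 hα₁).le (hφ₀ (-v))))
      (h.const_mul_atTop hα₀)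
  have hneg : ∀ {l : Filter ℝ}, Tendsto (fun v => φ (-v)) l atTop →
      Tendsto (alphaCombination φ α) l atTop :=
    fun h => tendsto_atTop_mono (fun v => le_add_of_nonneg_left (mul_nonneg hα₀.le (hφ₀ v)))
      (h.const_mul_atTop (sub_pos.2 hα₁))
  rw [cocompact_eq_atBot_atTop, tendsto_sup]
  rcases hφ with h | h
  · exact ⟨hneg (h.comp tendsto_neg_atBot_atTop), hpos h⟩
  · exact ⟨hpos h, hneg (h.comp tendsto_neg_atTop_atBot)⟩

end alphaCombination

/-- For a continuously differentiable, convex, nonnegative loss φ whose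
derivative is not constant, every α-combination D_α(v) = α·φ(v) + (1−α)·φ(−v) with
α ∈ (0,1) has a critical point, and every critical point is a global minimum. -/
theorem stmt0 (φ : ℝ → ℝ) (hC1 : ContDiff ℝ 1 φ) (hconv : ConvexOn ℝ Set.univ φ)
    (hnonneg : ∀ v : ℝ, 0 ≤ φ v)
    (hnotconst : ¬ ∃ c : ℝ, ∀ v : ℝ, deriv φ v = c)
    (α : ℝ) (hα : α ∈ Set.Ioo (0:ℝ) 1) :
    (∃ v : ℝ, deriv (fun v => α * φ v + (1 - α) * φ (-v)) v = 0) ∧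
    (∀ vstar : ℝ, deriv (fun v => α * φ v + (1 - α) * φ (-v)) vstar = 0 →
      ∀ v : ℝ, α * φ vstar + (1 - α) * φ (-vstar) ≤ α * φ v + (1 - α) * φ (-v)) := by
  change (∃ v, deriv (alphaCombination φ α) v = 0) ∧
    ∀ vstar, deriv (alphaCombination φ α) vstar = 0 →
      ∀ v, alphaCombination φ α vstar ≤ alphaCombination φ α v
  have hφd : Differentiable ℝ φ := hC1.differentiable one_ne_zero
  have hDd : Differentiable ℝ (alphaCombination φ α) := by
    unfold alphaCombination; fun_prop
  obtain ⟨b, hb⟩ : ∃ b, deriv φ b ≠ 0 := by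
    by_contra! h
    exact hnotconst ⟨0, h⟩
  have hlim : Tendsto φ atTop atTop ∨ Tendsto φ atBot atTop := by
    rcases hb.lt_or_gt with hb | hb
    · exact .inr (hconv.tendsto_atBot_of_deriv_neg (hφd b) hb)
    · exact .inl (hconv.tendsto_atTop_of_deriv_pos (hφd b) hb)
  refine ⟨?_, fun vstar hvstar v => ?_⟩
  · obtain ⟨v, hv⟩ := hDd.continuous.exists_forall_le
      (tendsto_alphaCombination_cocompact hnonneg hα hlim)
    exact ⟨v, IsLocalMin.deriv_eq_zero (IsMinOn.isLocalMin (fun w _ => hv w) univ_mem)⟩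
  · exact (hconv.alphaCombination hα.1.le hα.2.le).isMinOn_of_deriv_eq_zero
      (by simp) (hDd vstar) hvstar (mem_univ v)
end

section
/- Let φ : ℝ → ℝ be continuously differentiable with φ(v) > 0 and φ'(v) < 0 for all v ∈ ℝ. Define g(v) = φ'(v)/φ'(−v) and assume that the restriction of g to (0,∞) is a strictly decreasing bijection from (0,∞) onto (0,1). Then for every a ∈ (0,1), the function f_a(v) = a·φ(v) + (1−a)·φ(−v) has exactly one critical point v* ∈ ℝ; moreover f_a'(v) < 0 for v < v* and f_a'(v) > 0 for v > v*, so f_a attains its strict global minimum over ℝ at v*. -/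
/-!
Write `g = φ' / φ'(-·)`. Since `φ' < 0`, `f_a'(v) = φ'(-v) · (a g(v) - (1 - a))` has the sign of
`1 - a - a g(v)`. The symmetry `g(-v) = g(v)⁻¹` and `g(0) = 1` extend the hypotheses on `(0, ∞)` to
all of `ℝ`: `g` is a strictly decreasing bijection from `ℝ` onto `(0, ∞)`. Hence `g` takes the value
`(1 - a) / a` exactly once, at `v*`, and `f_a'` changes sign from negative to positive there.
-/

open Set

noncomputable def derivRatio (φ : ℝ → ℝ) (v : ℝ) : ℝ := deriv φ v / deriv φ (-v)

lemma derivRatio_neg (φ : ℝ → ℝ) (v : ℝ) : derivRatio φ (-v) = (derivRatio φ v)⁻¹ := by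
  simp only [derivRatio, neg_neg, inv_div]

lemma derivRatio_zero {φ : ℝ → ℝ} (h : deriv φ 0 ≠ 0) : derivRatio φ 0 = 1 := by
  simp only [derivRatio, neg_zero, div_self h]

section Reciprocal

variable {g : ℝ → ℝ}

lemma one_lt_of_neg_of_reciprocal (hneg : ∀ v, g (-v) = (g v)⁻¹)
    (hmaps : MapsTo g (Ioi 0) (Ioo 0 1)) {v : ℝ} (hv : v < 0) : 1 < g v := by
  have hmem := hmaps (neg_pos.2 hv : -v ∈ Ioi 0)
  rw [← neg_neg v, hneg]
  exact (one_lt_inv₀ hmem.1).2 hmem.2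

lemma strictAnti_of_reciprocal (hneg : ∀ v, g (-v) = (g v)⁻¹) (h0 : g 0 = 1)
    (hmaps : MapsTo g (Ioi 0) (Ioo 0 1)) (hanti : StrictAntiOn g (Ioi 0)) : StrictAnti g := by
  intro x y hxy
  rcases lt_trichotomy x 0 with hx | rfl | hx
  · rcases lt_trichotomy y 0 with hy | rfl | hy
    · have hx' : -x ∈ Ioi 0 := neg_pos.2 hx
      rw [← neg_neg x, ← neg_neg y, hneg (-x), hneg (-y)]
      exact inv_strictAnti₀ (hmaps hx').1 (hanti (neg_pos.2 hy) hx' (neg_lt_neg hxy))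
    · rw [h0]
      exact one_lt_of_neg_of_reciprocal hneg hmaps hx
    · exact (hmaps hy).2.trans (one_lt_of_neg_of_reciprocal hneg hmaps hx)
  · rw [h0]
    exact (hmaps hxy).2
  · exact hanti hx (mem_Ioi.2 (hx.trans hxy)) hxy

lemma exists_eq_of_reciprocal (hneg : ∀ v, g (-v) = (g v)⁻¹) (h0 : g 0 = 1)
    (hsurj : SurjOn g (Ioi 0) (Ioo 0 1)) {r : ℝ} (hr : 0 < r) : ∃ v, g v = r := by
  rcases lt_trichotomy r 1 with hr1 | rfl | hr1
  · obtain ⟨w, -, hw⟩ := hsurj ⟨hr, hr1⟩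
    exact ⟨w, hw⟩
  · exact ⟨0, h0⟩
  · obtain ⟨w, -, hw⟩ := hsurj ⟨inv_pos.2 hr, inv_lt_one_of_one_lt₀ hr1⟩
    exact ⟨-w, by rw [hneg, hw, inv_inv]⟩

end Reciprocal

lemma hasDerivAt_mul_add_mul_comp_neg {φ : ℝ → ℝ} (hφ : Differentiable ℝ φ) (a b v : ℝ) :
    HasDerivAt (fun v => a * φ v + b * φ (-v)) (a * deriv φ v - b * deriv φ (-v)) v := by
  have hφneg : HasDerivAt (fun w => φ (-w)) (deriv φ (-v) * (-1)) v :=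
    (hφ (-v)).hasDerivAt.comp v (hasDerivAt_neg v)
  exact (((hφ v).hasDerivAt.const_mul a).add (hφneg.const_mul b)).congr_deriv (by ring)

lemma deriv_mul_add_mul_comp_neg {φ : ℝ → ℝ} (hφ : Differentiable ℝ φ) (a b : ℝ) {v : ℝ}
    (hv : deriv φ (-v) ≠ 0) :
    deriv (fun v => a * φ v + b * φ (-v)) v = deriv φ (-v) * (a * derivRatio φ v - b) := by
  rw [(hasDerivAt_mul_add_mul_comp_neg hφ a b v).deriv, derivRatio]
  field_simp

lemma apply_lt_of_deriv_neg_of_deriv_pos {F : ℝ → ℝ} (hF : Continuous F) {c : ℝ}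
    (hleft : ∀ v, v < c → deriv F v < 0) (hright : ∀ v, c < v → 0 < deriv F v) {v : ℝ}
    (hv : v ≠ c) : F c < F v := by
  rcases hv.lt_or_gt with h | h
  · have hanti : StrictAntiOn F (Iic c) :=
      strictAntiOn_of_deriv_neg (convex_Iic c) hF.continuousOn
        (fun x hx => hleft x (by rwa [interior_Iic] at hx))
    exact hanti h.le (le_refl c) h
  · have hmono : StrictMonoOn F (Ici c) :=
      strictMonoOn_of_deriv_pos (convex_Ici c) hF.continuousOn
        (fun x hx => hright x (by rwa [interior_Ici] at hx))
    exact hmono (le_refl c) h.le h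

theorem stmt2_general (φ : ℝ → ℝ) (hC1 : ContDiff ℝ 1 φ)
    (hder : ∀ v : ℝ, deriv φ v < 0)
    (hanti : StrictAntiOn (fun v => deriv φ v / deriv φ (-v)) (Set.Ioi (0:ℝ)))
    (hbij : Set.BijOn (fun v => deriv φ v / deriv φ (-v)) (Set.Ioi (0:ℝ)) (Set.Ioo (0:ℝ) 1))
    (a : ℝ) (ha : a ∈ Set.Ioo (0:ℝ) 1) :
    ∃ vstar : ℝ,
      deriv (fun v => a * φ v + (1 - a) * φ (-v)) vstar = 0 ∧
      (∀ v : ℝ, deriv (fun v => a * φ v + (1 - a) * φ (-v)) v = 0 → v = vstar) ∧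
      (∀ v : ℝ, v < vstar → deriv (fun v => a * φ v + (1 - a) * φ (-v)) v < 0) ∧
      (∀ v : ℝ, vstar < v → 0 < deriv (fun v => a * φ v + (1 - a) * φ (-v)) v) ∧
      (∀ v : ℝ, v ≠ vstar →
        a * φ vstar + (1 - a) * φ (-vstar) < a * φ v + (1 - a) * φ (-v)) := by
  obtain ⟨ha0, ha1⟩ := ha
  have hφ : Differentiable ℝ φ := hC1.differentiable one_ne_zero
  have hg0 : derivRatio φ 0 = 1 := derivRatio_zero (hder 0).ne
  have hg : StrictAnti (derivRatio φ) :=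
    strictAnti_of_reciprocal (derivRatio_neg φ) hg0 hbij.mapsTo hanti
  obtain ⟨vstar, hvstar⟩ := exists_eq_of_reciprocal (derivRatio_neg φ) hg0 hbij.surjOn
    (div_pos (sub_pos.2 ha1) ha0)
  have hderivF : ∀ v, deriv (fun v => a * φ v + (1 - a) * φ (-v)) v =
      deriv φ (-v) * (a * (derivRatio φ v - derivRatio φ vstar)) := fun v => by
    rw [deriv_mul_add_mul_comp_neg hφ _ _ (hder _).ne, hvstar]
    field_simp
  have hleft : ∀ v, v < vstar → deriv (fun v => a * φ v + (1 - a) * φ (-v)) v < 0 :=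
    fun v hv => (hderivF v).symm ▸
      mul_neg_of_neg_of_pos (hder _) (mul_pos ha0 (sub_pos.2 (hg hv)))
  have hright : ∀ v, vstar < v → 0 < deriv (fun v => a * φ v + (1 - a) * φ (-v)) v :=
    fun v hv => (hderivF v).symm ▸
      mul_pos_of_neg_of_neg (hder _) (mul_neg_of_pos_of_neg ha0 (sub_neg.2 (hg hv)))
  refine ⟨vstar, by simp [hderivF], fun v hv => ?_, hleft, hright,
    fun v => apply_lt_of_deriv_neg_of_deriv_pos (by have := hφ.continuous; fun_prop) hleft hright⟩
  simpa [hderivF, (hder _).ne, ha0.ne', sub_eq_zero, hg.injective.eq_iff] using hv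

/-- If φ is C¹, positive, with strictly negative derivative, and
g(v) = φ'(v)/φ'(−v) restricted to (0,∞) is a strictly decreasing bijection onto (0,1),
then for every a ∈ (0,1) the combination f_a(v) = a·φ(v) + (1−a)·φ(−v) has exactly one
critical point v*, with f_a' < 0 left of v*, f_a' > 0 right of v*, and a strict global
minimum at v*. -/
theorem stmt2 (φ : ℝ → ℝ) (hC1 : ContDiff ℝ 1 φ)
    (hpos : ∀ v : ℝ, 0 < φ v) (hder : ∀ v : ℝ, deriv φ v < 0)
    (hanti : StrictAntiOn (fun v => deriv φ v / deriv φ (-v)) (Set.Ioi (0:ℝ)))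
    (hbij : Set.BijOn (fun v => deriv φ v / deriv φ (-v)) (Set.Ioi (0:ℝ)) (Set.Ioo (0:ℝ) 1))
    (a : ℝ) (ha : a ∈ Set.Ioo (0:ℝ) 1) :
    ∃ vstar : ℝ,
      deriv (fun v => a * φ v + (1 - a) * φ (-v)) vstar = 0 ∧
      (∀ v : ℝ, deriv (fun v => a * φ v + (1 - a) * φ (-v)) v = 0 → v = vstar) ∧
      (∀ v : ℝ, v < vstar → deriv (fun v => a * φ v + (1 - a) * φ (-v)) v < 0) ∧
      (∀ v : ℝ, vstar < v → 0 < deriv (fun v => a * φ v + (1 - a) * φ (-v)) v) ∧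
      (∀ v : ℝ, v ≠ vstar →
        a * φ vstar + (1 - a) * φ (-vstar) < a * φ v + (1 - a) * φ (-v)) :=
  stmt2_general φ hC1 hder hanti hbij a ha
end

section
/- Let a > 0, γ > 1, φ_{a,γ}(v) = 2^γ·(1 + e^{a v})^{−γ}, and for α ∈ (0,1) define D_α(v) = α·φ_{a,γ}(v) + (1−α)·φ_{a,γ}(−v). Set v* = (1/(a(γ−1)))·log(α/(1−α)). Then D_α'(v*) = 0, D_α'(v) < 0 for all v < v*, and D_α'(v) > 0 for all v > v*; consequently v* is the unique critical point of D_α and D_α attains its strict global minimum over ℝ at v*. -/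
/-!
Since `1 + e^{-u} = e^{-u} (1 + e^u)`, the derivative of `D_α` factors as a positive weight times
`(1 - α) e^{a(γ-1)v} - α`. As `a(γ-1) > 0` this factor is strictly increasing in `v` and vanishes
exactly at `v*`, so `D_α` is strictly decreasing left of `v*` and strictly increasing right of it.
-/

/-- The γ-robust loss φ_{a,γ}(v) = 2^γ·(1 + e^{a v})^{−γ}. -/
noncomputable def gammaRobust (a γ : ℝ) (v : ℝ) : ℝ :=
  (2:ℝ) ^ γ * (1 + Real.exp (a * v)) ^ (-γ)

open Real Set

theorem lt_of_deriv_neg_of_deriv_pos {f : ℝ → ℝ} {c x : ℝ} (hf : Differentiable ℝ f)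
    (hneg : ∀ y < c, deriv f y < 0) (hpos : ∀ y, c < y → 0 < deriv f y) (hx : x ≠ c) :
    f c < f x := by
  rcases hx.lt_or_gt with h | h
  · have hanti : StrictAntiOn f (Iic c) :=
      strictAntiOn_of_deriv_neg (convex_Iic c) hf.continuous.continuousOn
        (by rw [interior_Iic]; exact hneg)
    exact hanti h.le self_mem_Iic h
  · have hmono : StrictMonoOn f (Ici c) :=
      strictMonoOn_of_deriv_pos (convex_Ici c) hf.continuous.continuousOn
        (by rw [interior_Ici]; exact hpos)
    exact hmono self_mem_Ici h.le h

theorem one_add_exp_neg_rpow_mul_exp_neg (γ u : ℝ) :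
    exp (-u) * (1 + exp (-u)) ^ (-γ - 1) = exp (γ * u) * (1 + exp u) ^ (-γ - 1) := by
  have h : 1 + exp (-u) = exp (-u) * (1 + exp u) := by
    rw [mul_add, mul_one, ← exp_add, neg_add_cancel, exp_zero, add_comm]
  rw [h, mul_rpow (exp_pos _).le (by positivity), ← exp_mul, ← mul_assoc, ← exp_add]
  congr 2
  ring

theorem hasDerivAt_gammaRobust (a γ v : ℝ) :
    HasDerivAt (gammaRobust a γ)
      (-(a * γ * 2 ^ γ) * (exp (a * v) * (1 + exp (a * v)) ^ (-γ - 1))) v := by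
  have hexp : HasDerivAt (fun v ↦ 1 + exp (a * v)) (exp (a * v) * a) v := by
    simpa only [mul_comm a] using ((hasDerivAt_mul_const a).exp).const_add 1
  refine ((hexp.rpow_const (p := -γ) (Or.inl (by positivity))).const_mul
    ((2:ℝ) ^ γ)).congr_deriv ?_
  ring

theorem hasDerivAt_gammaRobust_add_gammaRobust_neg (a γ α v : ℝ) :
    HasDerivAt (fun v ↦ α * gammaRobust a γ v + (1 - α) * gammaRobust a γ (-v))
      (a * γ * 2 ^ γ * (exp (a * v) * (1 + exp (a * v)) ^ (-γ - 1)) *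
        ((1 - α) * exp (a * (γ - 1) * v) - α)) v := by
  have hright := (hasDerivAt_gammaRobust a γ (-v)).comp v (hasDerivAt_neg v)
  refine (((hasDerivAt_gammaRobust a γ v).const_mul α).add
    (hright.const_mul (1 - α))).congr_deriv ?_
  have hshift : exp (a * (γ - 1) * v) * exp (a * v) = exp (γ * (a * v)) := by
    rw [← exp_add]; ring_nf
  rw [show a * -v = -(a * v) by ring, one_add_exp_neg_rpow_mul_exp_neg, ← hshift]
  ring

theorem strictMono_one_sub_mul_exp_sub {α k : ℝ} (hα : α < 1) (hk : 0 < k) :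
    StrictMono fun v ↦ (1 - α) * exp (k * v) - α := fun _ _ h ↦ by
  have := exp_lt_exp.mpr (mul_lt_mul_of_pos_left h hk)
  dsimp only
  nlinarith

theorem one_sub_mul_exp_log_div_sub_eq_zero {α k : ℝ} (hα : α ∈ Ioo (0:ℝ) 1) (hk : k ≠ 0) :
    (1 - α) * exp (k * (1 / k * log (α / (1 - α)))) - α = 0 := by
  obtain ⟨hα0, hα1⟩ := hα
  have hα1' : 1 - α ≠ 0 := by linarith
  rw [one_div, ← mul_assoc, mul_inv_cancel₀ hk, one_mul, exp_log (div_pos hα0 (by linarith)),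
    mul_div_cancel₀ _ hα1', sub_self]

/-- For the γ-robust loss, the combination
D_α(v) = α·φ_{a,γ}(v) + (1−α)·φ_{a,γ}(−v) with α ∈ (0,1) has derivative vanishing at
v* = (1/(a(γ−1)))·log(α/(1−α)), is strictly decreasing before v* and strictly
increasing after; hence v* is the unique critical point and the strict global
minimizer of D_α. -/
theorem stmt5 (a γ : ℝ) (ha : 0 < a) (hγ : 1 < γ)
    (α : ℝ) (hα : α ∈ Set.Ioo (0:ℝ) 1)
    (D : ℝ → ℝ) (hD : ∀ v : ℝ, D v = α * gammaRobust a γ v + (1 - α) * gammaRobust a γ (-v))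
    (vstar : ℝ) (hv : vstar = (1 / (a * (γ - 1))) * Real.log (α / (1 - α))) :
    deriv D vstar = 0 ∧
    (∀ v : ℝ, v < vstar → deriv D v < 0) ∧
    (∀ v : ℝ, vstar < v → 0 < deriv D v) ∧
    (∀ v : ℝ, deriv D v = 0 → v = vstar) ∧
    (∀ v : ℝ, v ≠ vstar → D vstar < D v) := by
  have hk : 0 < a * (γ - 1) := mul_pos ha (by linarith)
  have hD' : D = fun v ↦ α * gammaRobust a γ v + (1 - α) * gammaRobust a γ (-v) := funext hD
  set s := fun v ↦ (1 - α) * exp (a * (γ - 1) * v) - α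
  have hderiv : ∀ v, deriv D v =
      a * γ * 2 ^ γ * (exp (a * v) * (1 + exp (a * v)) ^ (-γ - 1)) * s v := fun v ↦ by
    rw [hD', (hasDerivAt_gammaRobust_add_gammaRobust_neg a γ α v).deriv]
  have hweight : ∀ v, 0 < a * γ * 2 ^ γ * (exp (a * v) * (1 + exp (a * v)) ^ (-γ - 1)) :=
    have : 0 < γ := by linarith
    fun v ↦ by positivity
  have hs_mono : StrictMono s := strictMono_one_sub_mul_exp_sub hα.2 hk
  have hs_zero : s vstar = 0 := hv ▸ one_sub_mul_exp_log_div_sub_eq_zero hα hk.ne'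
  have hneg : ∀ v < vstar, deriv D v < 0 := fun v h ↦ by
    rw [hderiv]; exact mul_neg_of_pos_of_neg (hweight v) (hs_zero ▸ hs_mono h)
  have hpos : ∀ v, vstar < v → 0 < deriv D v := fun v h ↦ by
    rw [hderiv]; exact mul_pos (hweight v) (hs_zero ▸ hs_mono h)
  have hdiff : Differentiable ℝ D := fun v ↦
    (hD' ▸ hasDerivAt_gammaRobust_add_gammaRobust_neg a γ α v).differentiableAt
  refine ⟨by rw [hderiv, hs_zero, mul_zero], hneg, hpos, fun v h ↦ ?_,
    fun v ↦ lt_of_deriv_neg_of_deriv_pos hdiff hneg hpos⟩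
  rcases lt_trichotomy v vstar with hlt | heq | hgt
  · exact absurd h (hneg v hlt).ne
  · exact heq
  · exact absurd h (hpos v hgt).ne'
end

section
/- Let a > 0, γ > 1, φ_{a,γ}(v) = 2^γ·(1 + e^{a v})^{−γ}, and for η ∈ [0,1] define C_η(v) = η·φ_{a,γ}(v) + (1−η)·φ_{a,γ}(−v). Then for every η ∈ [0,1] with η ≠ 1/2: (a) C_η(v) ≥ 1 for every v ∈ ℝ with v·(2η−1) ≤ 0; and (b) there exists v ∈ ℝ with C_η(v) < 1. Consequently inf{C_η(v) : v(2η−1) ≤ 0} > inf{C_η(v) : v ∈ ℝ}, i.e. φ_{a,γ} is classification calibrated (Condition (iii)). -/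
open Real Set

noncomputable def condRisk (φ : ℝ → ℝ) (η v : ℝ) : ℝ :=
  η * φ v + (1 - η) * φ (-v)

section condRisk

variable {φ : ℝ → ℝ} {η : ℝ}

lemma condRisk_nonneg (hφ : ∀ v, 0 ≤ φ v) (hη : η ∈ Icc (0 : ℝ) 1) (v : ℝ) :
    0 ≤ condRisk φ η v :=
  add_nonneg (mul_nonneg hη.1 (hφ v)) (mul_nonneg (sub_nonneg.2 hη.2) (hφ (-v)))

lemma one_le_condRisk (hφ_neg : ∀ v ≤ 0, 1 ≤ φ v) (hφ_sym : ∀ v, 2 ≤ φ v + φ (-v))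
    (hη : η ∈ Icc (0 : ℝ) 1) {v : ℝ} (hv : v * (2 * η - 1) ≤ 0) : 1 ≤ condRisk φ η v := by
  obtain ⟨hη0, hη1⟩ := hη
  have hsym := hφ_sym v
  unfold condRisk
  rcases lt_trichotomy η (1 / 2) with hη' | rfl | hη'
  · have hφv := hφ_neg (-v) (neg_nonpos.2 (by nlinarith))
    nlinarith [mul_le_mul_of_nonneg_left hsym hη0]
  · linarith
  · have hφv := hφ_neg v (by nlinarith)
    nlinarith [mul_le_mul_of_nonneg_left hsym (sub_nonneg.2 hη1)]

lemma hasDerivAt_condRisk_zero {d : ℝ} (hφ : HasDerivAt φ d 0) :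
    HasDerivAt (condRisk φ η) ((2 * η - 1) * d) 0 := by
  have hφ_neg : HasDerivAt (fun v ↦ φ (-v)) (-d) 0 :=
    ((neg_zero (G := ℝ) ▸ hφ).comp 0 (hasDerivAt_neg 0)).congr_deriv (mul_neg_one d)
  exact ((hφ.const_mul η).add (hφ_neg.const_mul (1 - η))).congr_deriv (by ring)

lemma exists_condRisk_lt_one (hφ0 : φ 0 = 1) {d : ℝ} (hφ : HasDerivAt φ d 0) (hd : d ≠ 0)
    (hη : η ≠ 1 / 2) : ∃ v, condRisk φ η v < 1 := by
  by_contra! hge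
  have hmin : IsLocalMin (condRisk φ η) 0 :=
    Filter.Eventually.of_forall fun v ↦ by
      simpa [condRisk, hφ0] using hge v
  have hzero := hmin.hasDerivAt_eq_zero (hasDerivAt_condRisk_zero hφ)
  rcases mul_eq_zero.1 hzero with h | h
  · exact hη (by linarith)
  · exact hd h

end condRisk

lemma csInf_range_lt_csInf_image {α β : Type*} [ConditionallyCompleteLinearOrder β]
    {f : α → β} {s : Set α} {c : β} (hbdd : BddBelow (range f)) (hs : s.Nonempty)
    (hlt : ∃ x, f x < c) (hge : ∀ x ∈ s, c ≤ f x) : sInf (range f) < sInf (f '' s) := by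
  obtain ⟨x, hx⟩ := hlt
  calc sInf (range f) ≤ f x := csInf_le hbdd ⟨x, rfl⟩
    _ < c := hx
    _ ≤ sInf (f '' s) := le_csInf (hs.image f) (forall_mem_image.2 hge)

lemma two_le_rpow_add_rpow_two_sub {x γ : ℝ} (hγ : 1 ≤ γ) (hx0 : 0 ≤ x) (hx2 : x ≤ 2) :
    2 ≤ x ^ γ + (2 - x) ^ γ := by
  have hconv := (convexOn_rpow hγ).2 (mem_Ici.2 hx0) (mem_Ici.2 (sub_nonneg.2 hx2))
    (by norm_num : (0 : ℝ) ≤ 1 / 2) (by norm_num : (0 : ℝ) ≤ 1 / 2) (by norm_num)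
  have hmid : 1 / 2 * x + 1 / 2 * (2 - x) = 1 := by ring
  simp only [smul_eq_mul] at hconv
  rw [hmid, one_rpow] at hconv
  linarith

section gammaRobust

variable {a γ : ℝ}

lemma gammaRobust_eq_rpow (a γ v : ℝ) : gammaRobust a γ v = (2 / (1 + exp (a * v))) ^ γ := by
  rw [gammaRobust, div_rpow zero_le_two (by positivity), rpow_neg (by positivity), div_eq_mul_inv]

lemma gammaRobust_pos (a γ v : ℝ) : 0 < gammaRobust a γ v := by
  rw [gammaRobust_eq_rpow]
  positivity

lemma gammaRobust_zero (a γ : ℝ) : gammaRobust a γ 0 = 1 := by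
  norm_num [gammaRobust_eq_rpow]

lemma one_le_gammaRobust (ha : 0 ≤ a) (hγ : 0 ≤ γ) {v : ℝ} (hv : v ≤ 0) :
    1 ≤ gammaRobust a γ v := by
  rw [gammaRobust_eq_rpow]
  refine one_le_rpow ?_ hγ
  rw [le_div_iff₀ (by positivity)]
  linarith [exp_le_one_iff.2 (mul_nonpos_of_nonneg_of_nonpos ha hv)]

lemma two_le_gammaRobust_add_gammaRobust_neg (hγ : 1 ≤ γ) (v : ℝ) :
    2 ≤ gammaRobust a γ v + gammaRobust a γ (-v) := by
  have hpos : 0 < 1 + exp (a * v) := by positivity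
  have hneg : 2 / (1 + exp (a * -v)) = 2 - 2 / (1 + exp (a * v)) := by
    rw [mul_neg, exp_neg]
    field_simp
    ring
  rw [gammaRobust_eq_rpow, gammaRobust_eq_rpow, hneg]
  refine two_le_rpow_add_rpow_two_sub hγ (by positivity) ?_
  rw [div_le_iff₀ hpos]
  linarith [exp_pos (a * v)]

lemma hasDerivAt_gammaRobust_zero (a γ : ℝ) :
    HasDerivAt (gammaRobust a γ) (-(a / 2 * γ)) 0 := by
  have hinner : HasDerivAt (fun v ↦ 2 / (1 + exp (a * v))) (-(a / 2)) 0 :=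
    ((hasDerivAt_const (0 : ℝ) (2 : ℝ)).fun_div
      ((((hasDerivAt_id' 0).const_mul a).exp).const_add 1) (by positivity)).congr_deriv
      (by norm_num; ring)
  rw [funext (gammaRobust_eq_rpow a γ)]
  exact (hinner.rpow_const (Or.inl (by norm_num))).congr_deriv (by norm_num)

end gammaRobust

/-- The γ-robust loss is classification calibrated: for every
η ∈ [0,1] with η ≠ 1/2, the combination C_η(v) = η·φ_{a,γ}(v) + (1−η)·φ_{a,γ}(−v)
is ≥ 1 whenever v·(2η−1) ≤ 0 but drops below 1 somewhere, so the constrained infimum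
is strictly larger than the unconstrained one. -/
theorem stmt6 (a γ : ℝ) (ha : 0 < a) (hγ : 1 < γ)
    (η : ℝ) (hη : η ∈ Set.Icc (0:ℝ) 1) (hne : η ≠ 1/2)
    (C : ℝ → ℝ)
    (hC : ∀ v : ℝ, C v = η * gammaRobust a γ v + (1 - η) * gammaRobust a γ (-v)) :
    (∀ v : ℝ, v * (2 * η - 1) ≤ 0 → 1 ≤ C v) ∧
    (∃ v : ℝ, C v < 1) ∧
    sInf (Set.range C) < sInf (C '' {v : ℝ | v * (2 * η - 1) ≤ 0}) := by
  obtain rfl : C = condRisk (gammaRobust a γ) η := funext hC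
  have hge : ∀ v, v * (2 * η - 1) ≤ 0 → 1 ≤ condRisk (gammaRobust a γ) η v :=
    fun v ↦ one_le_condRisk (fun _ ↦ one_le_gammaRobust ha.le (by linarith))
      (two_le_gammaRobust_add_gammaRobust_neg hγ.le) hη
  have hlt : ∃ v, condRisk (gammaRobust a γ) η v < 1 :=
    exists_condRisk_lt_one (gammaRobust_zero a γ) (hasDerivAt_gammaRobust_zero a γ)
      (by nlinarith) hne
  have hbdd : BddBelow (range (condRisk (gammaRobust a γ) η)) :=
    ⟨0, forall_mem_range.2 (condRisk_nonneg (fun v ↦ (gammaRobust_pos a γ v).le) hη)⟩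
  exact ⟨hge, hlt, csInf_range_lt_csInf_image hbdd ⟨0, by simp⟩ hlt hge⟩
end

section
/- Let φ : ℝ → ℝ be continuously differentiable with φ(v) > 0 and φ'(v) < 0 for all v ∈ ℝ, and suppose that the restriction of g(v) = φ'(v)/φ'(−v) to (0,∞) is a strictly decreasing bijection from (0,∞) onto (0,1). Define G(v) = φ'(−v)/φ'(v). Then G is a strictly increasing bijection from ℝ onto (0,∞) with G(0) = 1. Consequently, for every F ∈ ℝ and every p ∈ (0,1), there exists a unique h ∈ ℝ solving G(F + h) = (p/(1−p))·G(F); moreover h > 0 if p > 1/2, h = 0 if p = 1/2, and h < 0 if p < 1/2. -/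
/-- Under the hypotheses of Lemma 3.3 (φ C¹, positive, strictly negative
derivative, g(v) = φ'(v)/φ'(−v) a strictly decreasing bijection from (0,∞) onto (0,1)),
the ratio G(v) = φ'(−v)/φ'(v) is a strictly increasing bijection from ℝ onto (0,∞) with
G(0) = 1; consequently the Arch Boost update equation G(F+h) = (p/(1−p))·G(F) has a
unique solution h for every F ∈ ℝ and p ∈ (0,1), whose sign matches that of p − 1/2. -/
theorem stmt7 (φ : ℝ → ℝ) (hC1 : ContDiff ℝ 1 φ)
    (hpos : ∀ v : ℝ, 0 < φ v) (hder : ∀ v : ℝ, deriv φ v < 0)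
    (hanti : StrictAntiOn (fun v => deriv φ v / deriv φ (-v)) (Set.Ioi (0:ℝ)))
    (hbij : Set.BijOn (fun v => deriv φ v / deriv φ (-v)) (Set.Ioi (0:ℝ)) (Set.Ioo (0:ℝ) 1))
    (G : ℝ → ℝ) (hG : ∀ v : ℝ, G v = deriv φ (-v) / deriv φ v) :
    StrictMono G ∧
    Set.BijOn G Set.univ (Set.Ioi (0:ℝ)) ∧
    G 0 = 1 ∧
    (∀ F p : ℝ, p ∈ Set.Ioo (0:ℝ) 1 →
      (∃! h : ℝ, G (F + h) = (p / (1 - p)) * G F) ∧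
      (∀ h : ℝ, G (F + h) = (p / (1 - p)) * G F →
        (1/2 < p → 0 < h) ∧ (p = 1/2 → h = 0) ∧ (p < 1/2 → h < 0))) := by
  set g : ℝ → ℝ := fun v => deriv φ v / deriv φ (-v) with hg
  have hdne : ∀ v : ℝ, deriv φ v ≠ 0 := fun v => (hder v).ne
  have hGpos : ∀ v : ℝ, 0 < G v := by
    intro v; rw [hG]; exact div_pos_of_neg_of_neg (hder _) (hder _)
  have hG0 : G 0 = 1 := by rw [hG]; simp [div_self (hdne 0)]
  have hGg : ∀ v : ℝ, G v = g (-v) := by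
    intro v; rw [hG]; simp [hg]
  have hGinv : ∀ v : ℝ, G v = 1 / g v := by
    intro v; rw [hG, hg]; simp [one_div_div]
  have hgpos : ∀ v ∈ Set.Ioi (0:ℝ), g v ∈ Set.Ioo (0:ℝ) 1 := hbij.mapsTo
  have hGgt1 : ∀ v : ℝ, 0 < v → 1 < G v := by
    intro v hv
    rw [hGinv]
    have h := hgpos v hv
    exact one_lt_one_div h.1 h.2
  have hGlt1 : ∀ v : ℝ, v < 0 → G v < 1 := by
    intro v hv
    rw [hGg]
    exact (hgpos (-v) (by simpa using hv)).2
  have hmono : StrictMono G := by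
    intro a b hab
    rcases lt_trichotomy b 0 with hb | hb | hb
    · rw [hGg a, hGg b]
      exact hanti (Set.mem_Ioi.mpr (by linarith)) (Set.mem_Ioi.mpr (by linarith))
        (by linarith)
    · subst hb; rw [hG0]; exact hGlt1 a hab
    · rcases lt_trichotomy a 0 with ha | ha | ha
      · exact (hGlt1 a ha).trans (hGgt1 b hb)
      · subst ha; rw [hG0]; exact hGgt1 b hb
      · rw [hGinv a, hGinv b]
        exact one_div_lt_one_div_of_lt (hgpos b hb).1
          (hanti (Set.mem_Ioi.mpr ha) (Set.mem_Ioi.mpr hb) hab)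
  have hsurj : ∀ y : ℝ, 0 < y → ∃ v, G v = y := by
    intro y hy
    rcases lt_trichotomy y 1 with h | h | h
    · obtain ⟨v, hv, hgv⟩ := hbij.surjOn (Set.mem_Ioo.mpr ⟨hy, h⟩)
      exact ⟨-v, by rw [hGg]; simpa using hgv⟩
    · exact ⟨0, by rw [hG0, h]⟩
    · have hmem : 1/y ∈ Set.Ioo (0:ℝ) 1 :=
        ⟨by positivity, by rw [div_lt_one (by linarith)]; linarith⟩
      obtain ⟨v, hv, hgv⟩ := hbij.surjOn hmem
      refine ⟨v, ?_⟩
      rw [hGinv, hgv, one_div_one_div]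
  refine ⟨hmono, ⟨fun v _ => hGpos v, hmono.injective.injOn, ?_⟩, hG0, ?_⟩
  · intro y hy
    obtain ⟨v, hv⟩ := hsurj y (Set.mem_Ioi.mp hy)
    exact ⟨v, trivial, hv⟩
  · intro F p hp
    have hp1 : 0 < p := hp.1
    have h1p : 0 < 1 - p := by linarith [hp.2]
    have hratio : 0 < p / (1 - p) := div_pos hp1 h1p
    have htpos : 0 < p / (1 - p) * G F := mul_pos hratio (hGpos F)
    obtain ⟨w, hw⟩ := hsurj _ htpos
    constructor
    · refine ⟨w - F, ?_, ?_⟩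
      · show G (F + (w - F)) = _; rw [show F + (w - F) = w by ring, hw]
      · intro h' hh'
        have : F + h' = w := hmono.injective (hh'.trans hw.symm)
        linarith
    · intro h hh
      refine ⟨?_, ?_, ?_⟩
      · intro hph
        have hr : 1 < p / (1 - p) := (one_lt_div h1p).mpr (by linarith)
        have : G F < G (F + h) := by
          rw [hh]; exact lt_mul_of_one_lt_left (hGpos F) hr
        have := hmono.lt_iff_lt.mp this
        linarith
      · intro hph
        subst hph
        have hr : (1:ℝ)/2 / (1 - 1/2) = 1 := by norm_num
        rw [hr, one_mul] at hh
        have := hmono.injective hh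
        linarith
      · intro hph
        have hr : p / (1 - p) < 1 := (div_lt_one h1p).mpr (by linarith)
        have : G (F + h) < G F := by
          rw [hh]
          nlinarith [hGpos F]
        have := hmono.lt_iff_lt.mp this
        linarith
end

section
/- Let n ≥ 1 and J ≥ 1. Let (y_i)_{i=1}^n with y_i ∈ {−1,1}, weights w_i > 0, a region assignment r : {1,…,n} → {1,…,J} with W_j = Σ_{i : r(i)=j} w_i > 0 for each j, and let O ⊆ {1,…,n} be a set of outlier indices. For each j set p_j = (Σ_{i : r(i)=j, y_i=1} w_i)/W_j and assume p_j ∈ (0,1) and p_j ≠ 1/2, and set η_j = |p_j − 1/2| / min(p_j, 1−p_j). Let θ : ℝ → ℝ be strictly increasing with θ(1/2) = 0 and define h_i = θ(p_{r(i)}). If for every j, Σ_{i ∈ O, r(i)=j} w_i ≤ η_j · Σ_{i ∉ O, r(i)=j} w_i, then Σ_{i ∉ O} w_i·y_i·h_i ≥ 0. -/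
/-- breakdown point, Theorem 2: if in every region j the total weight on
outliers is at most η_j = |p_j − 1/2|/min(p_j, 1−p_j) times the total weight on inliers,
then the region-constant weak hypothesis h_i = θ(p_{r(i)}) computed on the contaminated
sample still satisfies Σ_{i ∉ O} w_i y_i h_i ≥ 0, i.e. it remains a descent direction
for the empirical risk of the non-contaminated data. -/
theorem stmt10 (n J : ℕ) (hn : 1 ≤ n) (hJ : 1 ≤ J)
    (y w : Fin n → ℝ) (hy : ∀ i, y i = 1 ∨ y i = -1) (hw : ∀ i, 0 < w i)
    (r : Fin n → Fin J)
    (W : Fin J → ℝ)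
    (hW : ∀ j, W j = ∑ i ∈ Finset.univ.filter (fun i => r i = j), w i)
    (hWpos : ∀ j, 0 < W j)
    (O : Finset (Fin n))
    (p : Fin J → ℝ)
    (hp : ∀ j, p j = (∑ i ∈ Finset.univ.filter (fun i => r i = j ∧ y i = 1), w i) / W j)
    (hp01 : ∀ j, p j ∈ Set.Ioo (0:ℝ) 1) (hphalf : ∀ j, p j ≠ 1/2)
    (η : Fin J → ℝ) (hη : ∀ j, η j = |p j - 1/2| / min (p j) (1 - p j))
    (θ : ℝ → ℝ) (hθ : StrictMono θ) (hθhalf : θ (1/2) = 0)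
    (h : Fin n → ℝ) (hh : ∀ i, h i = θ (p (r i)))
    (hout : ∀ j, (∑ i ∈ Finset.univ.filter (fun i => i ∈ O ∧ r i = j), w i)
      ≤ η j * ∑ i ∈ Finset.univ.filter (fun i => i ∉ O ∧ r i = j), w i) :
    0 ≤ ∑ i ∈ Finset.univ.filter (fun i => i ∉ O), w i * y i * h i := by
  classical
  have key : ∀ j : Fin J,
      0 ≤ ∑ i ∈ Finset.univ.filter (fun i => i ∉ O ∧ r i = j), w i * y i * h i := by
    intro j
    set Sj := Finset.univ.filter (fun i : Fin n => i ∉ O ∧ r i = j) with hSjdef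
    set Tj := Finset.univ.filter (fun i : Fin n => i ∈ O ∧ r i = j) with hTjdef
    set Rj := Finset.univ.filter (fun i : Fin n => r i = j) with hRjdef
    have hT : Tj = Rj.filter (fun i => i ∈ O) := by
      rw [hTjdef, hRjdef]; ext i; simp [and_comm]
    have hS : Sj = Rj.filter (fun i => i ∉ O) := by
      rw [hSjdef, hRjdef]; ext i; simp [and_comm]
    have hsplit : ∀ f : Fin n → ℝ,
        (∑ i ∈ Tj, f i) + (∑ i ∈ Sj, f i) = ∑ i ∈ Rj, f i := by
      intro f
      rw [hT, hS]
      exact Finset.sum_filter_add_sum_filter_not Rj _ f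
    set A := ∑ i ∈ Sj, w i * y i with hA
    set B := ∑ i ∈ Tj, w i * y i with hB
    set I := ∑ i ∈ Sj, w i with hI
    set Oj := ∑ i ∈ Tj, w i with hOj
    have hW' : W j = Oj + I := by
      rw [hW j, hOj, hI, ← hsplit (fun i => w i)]
    have hInn : 0 ≤ I := Finset.sum_nonneg fun i _ => (hw i).le
    have hOnn : 0 ≤ Oj := Finset.sum_nonneg fun i _ => (hw i).le
    have hBle : B ≤ Oj := by
      rw [hB, hOj]
      refine Finset.sum_le_sum fun i _ => ?_
      rcases hy i with hy1 | hy1 <;> simp [hy1] <;> nlinarith [hw i]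
    have hBge : -Oj ≤ B := by
      have hneg : -Oj = ∑ i ∈ Tj, -(w i) := by rw [hOj]; simp
      rw [hB, hneg]
      refine Finset.sum_le_sum fun i _ => ?_
      rcases hy i with hy1 | hy1 <;> simp [hy1] <;> nlinarith [hw i]
    set P := ∑ i ∈ Finset.univ.filter (fun i : Fin n => r i = j ∧ y i = 1), w i with hPdef
    have hPW : P = p j * W j := by
      rw [hp j]
      exact (div_mul_cancel₀ _ (hWpos j).ne').symm
    have hPfilter : Finset.univ.filter (fun i : Fin n => r i = j ∧ y i = 1)
        = Rj.filter (fun i => y i = 1) := by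
      rw [hRjdef]; ext i; simp
    have h1' : ∑ i ∈ Rj.filter (fun i => y i = 1), w i * y i = P := by
      rw [hPdef, hPfilter]
      refine Finset.sum_congr rfl fun i hi => ?_
      simp only [Finset.mem_filter] at hi
      simp [hi.2]
    have h2' : ∑ i ∈ Rj.filter (fun i => ¬ y i = 1), w i * y i
        = -(∑ i ∈ Rj.filter (fun i => ¬ y i = 1), w i) := by
      rw [← Finset.sum_neg_distrib]
      refine Finset.sum_congr rfl fun i hi => ?_
      simp only [Finset.mem_filter] at hi
      rcases hy i with hy1 | hy1
      · exact absurd hy1 hi.2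
      · simp [hy1]
    have h3' : P + (∑ i ∈ Rj.filter (fun i => ¬ y i = 1), w i) = W j := by
      rw [hPdef, hPfilter, Finset.sum_filter_add_sum_filter_not, hW j]
    have hCRj : ∑ i ∈ Rj, w i * y i = (2 * p j - 1) * W j := by
      rw [← Finset.sum_filter_add_sum_filter_not Rj (fun i => y i = 1)
        (fun i => w i * y i), h1', h2']
      linarith [hPW, h3']
    have hC : B + A = (2 * p j - 1) * W j := by
      rw [hB, hA, hsplit (fun i => w i * y i)]
      exact hCRj
    have hOut : Oj ≤ η j * I := by
      rw [hOj, hI, hTjdef, hSjdef]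
      exact hout j
    have hsum : ∑ i ∈ Sj, w i * y i * h i = A * θ (p j) := by
      rw [hA, Finset.sum_mul]
      refine Finset.sum_congr rfl fun i hi => ?_
      rw [hSjdef] at hi
      simp only [Finset.mem_filter] at hi
      rw [hh i, hi.2.2]
    obtain ⟨hp0, hp1⟩ := hp01 j
    rw [hsum]
    rcases lt_or_gt_of_ne (hphalf j) with hlt | hgt
    · -- p j < 1/2 : θ(p j) ≤ 0, A ≤ 0
      have hmin : min (p j) (1 - p j) = p j := min_eq_left (by linarith)
      have habs : |p j - 1/2| = 1/2 - p j := by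
        rw [abs_of_neg (by linarith)]; ring
      have hηp : η j * p j = 1/2 - p j := by
        rw [hη j, hmin, habs]
        exact div_mul_cancel₀ _ hp0.ne'
      have hθneg : θ (p j) ≤ 0 := by
        have h0 : θ (p j) < θ (1/2) := hθ hlt
        rw [hθhalf] at h0
        exact h0.le
      have k1 : p j * Oj ≤ p j * (η j * I) :=
        mul_le_mul_of_nonneg_left hOut hp0.le
      have k2 : p j * (η j * I) = (1/2 - p j) * I := by
        have e : p j * (η j * I) = (η j * p j) * I := by ring
        rw [e, hηp]
      have e1 : (2 * p j - 1) * W j = (2 * p j - 1) * Oj + (2 * p j - 1) * I := by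
        rw [hW']; ring
      have hAle : A ≤ 0 := by linarith [k1, k2, hBge, hC, e1]
      have := mul_nonneg (neg_nonneg.2 hAle) (neg_nonneg.2 hθneg)
      linarith [this]
    · -- p j > 1/2 : θ(p j) ≥ 0, A ≥ 0
      have h1p : 0 < 1 - p j := by linarith
      have hmin : min (p j) (1 - p j) = 1 - p j := min_eq_right (by linarith)
      have habs : |p j - 1/2| = p j - 1/2 := abs_of_pos (by linarith)
      have hηp : η j * (1 - p j) = p j - 1/2 := by
        rw [hη j, hmin, habs]
        exact div_mul_cancel₀ _ h1p.ne'
      have hθpos : 0 ≤ θ (p j) := by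
        have h0 : θ (1/2) < θ (p j) := hθ hgt
        rw [hθhalf] at h0
        exact h0.le
      have k1 : (1 - p j) * Oj ≤ (1 - p j) * (η j * I) :=
        mul_le_mul_of_nonneg_left hOut h1p.le
      have k2 : (1 - p j) * (η j * I) = (p j - 1/2) * I := by
        have e : (1 - p j) * (η j * I) = (η j * (1 - p j)) * I := by ring
        rw [e, hηp]
      have e1 : (2 * p j - 1) * W j = (2 * p j - 1) * Oj + (2 * p j - 1) * I := by
        rw [hW']; ring
      have hAge : 0 ≤ A := by linarith [k1, k2, hBle, hC, e1]
      exact mul_nonneg hAge hθpos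
  rw [← Finset.sum_fiberwise (Finset.univ.filter (fun i => i ∉ O)) r
    (fun i => w i * y i * h i)]
  refine Finset.sum_nonneg fun j _ => ?_
  rw [Finset.filter_filter]
  exact key j
end
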